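/- Let G be a graph, let A₁, …, A_d be vertex subsets each of size at least m, and let T be a vertex subset. Let ∂𝒬 ⊆ A₁ × ⋯ × A_d be the set of ordered d-tuples (v₁, …, v_d) for which v_a = v_b for some distinct a, b ∈ [d]. Then Σ_{Q ∈ ∂𝒬} ω_θ(Q;T)^s ≤ (d(d−1)/(2m))·Σ_{Q ∈ A₁ × ⋯ × A_d} ω_θ(Q;T)^s for all natural numbers s and positive reals θ. -/

import Mathlib

open Finset
open scoped ENNReal Classical

namespace BurrErdosLee

/-- The set of common neighbors, inside `T`, of the coordinates of the tuple `Q`. -/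
noncomputable def commonNbrs {V : Type} [Fintype V] [DecidableEq V] (G : SimpleGraph V)
    {d : ℕ} (Q : Fin d → V) (T : Finset V) : Finset V :=
  T.filter fun x => ∀ a, G.Adj (Q a) x

/-- Power with the convention `0 ^ 0 = 0` (used for defects). -/
noncomputable def dpow (x : ℝ≥0∞) (s : ℕ) : ℝ≥0∞ :=
  if x = 0 then 0 else x ^ s

/-- The `θ`-defect of the tuple `Q` in `T`: it is `0` if `Q` has at least `θ` common
neighbors in `T`, and `θ / |N(Q;T)|` otherwise (`∞` when there are no common neighbors). -/
noncomputable def defect {V : Type} [Fintype V] [DecidableEq V] (G : SimpleGraph V) (θ : ℝ)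
    {d : ℕ} (Q : Fin d → V) (T : Finset V) : ℝ≥0∞ :=
  if θ ≤ ((commonNbrs G Q T).card : ℝ) then 0
  else ENNReal.ofReal θ / ((commonNbrs G Q T).card : ℝ≥0∞)

/-- The `s`-th moment of the `θ`-defect of the family of tuples `𝒬` in `T`. -/
noncomputable def mu {V : Type} [Fintype V] [DecidableEq V] (G : SimpleGraph V)
    (s : ℕ) (θ : ℝ) {d : ℕ} (𝒬 : Finset (Fin d → V)) (T : Finset V) : ℝ≥0∞ :=
  (∑ Q ∈ 𝒬, dpow (defect G θ Q T) s) / (𝒬.card : ℝ≥0∞)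

/-- `G` contains a copy of `H`. -/
def Contains {W V : Type} (G : SimpleGraph V) (H : SimpleGraph W) : Prop :=
  ∃ f : W → V, Function.Injective f ∧ ∀ ⦃a b⦄, H.Adj a b → G.Adj (f a) (f b)

/-- `H` is `d`-degenerate: every subgraph has a vertex of degree at most `d`. -/
def IsDegen {W : Type} [Fintype W] (d : ℕ) (H : SimpleGraph W) : Prop :=
  ∀ S : Finset W, S.Nonempty → ∃ v ∈ S, (S.filter fun w => H.Adj v w).card ≤ d

/-- The density of a graph: the fraction of pairs of distinct vertices forming an edge. -/
noncomputable def graphDensity {V : Type} [Fintype V] (G : SimpleGraph V) : ℝ :=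
  ((Finset.univ.filter fun p : V × V => G.Adj p.1 p.2).card : ℝ) /
    ((Fintype.card V : ℝ) * ((Fintype.card V : ℝ) - 1))

/-- The density of the bipartite graph between the vertex sets `V1` and `V2`. -/
noncomputable def crossDensity {V : Type} [Fintype V] (G : SimpleGraph V)
    (V1 V2 : Finset V) : ℝ :=
  (((V1 ×ˢ V2).filter fun p => G.Adj p.1 p.2).card : ℝ) / ((V1.card : ℝ) * (V2.card : ℝ))

/-- For a family `A₁, …, A_r`, the union `A_{-j}` of all the sets except `A j`. -/
noncomputable def unionOthers {V : Type} [DecidableEq V] {r : ℕ} (A : Fin r → Finset V)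
    (j : Fin r) : Finset V :=
  (Finset.univ.erase j).biUnion A

end BurrErdosLee

open BurrErdosLee

/-!
A tuple with a repeated coordinate has `Q a = Q b` for some `a < b`. Resetting `Q b` to any
`v ∈ A b` only adds a constraint on common neighbours, since the old value `Q b = Q a` is still
present; so the common neighbourhood can only shrink and the defect can only grow. As `(Q, v) ↦ Q[b ↦ v]` is
injective on such tuples, the tuples with `Q a = Q b` carry at most a `1/m` fraction of the
total `s`-th moment; summing over the `d(d-1)/2` pairs `a < b` gives the bound.
-/

open Function

theorem Finset.sum_biUnion_le {ι α : Type*} [DecidableEq α] (s : Finset ι)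
    (t : ι → Finset α) (f : α → ℝ≥0∞) :
    ∑ x ∈ s.biUnion t, f x ≤ ∑ i ∈ s, ∑ x ∈ t i, f x := by
  have h : s.biUnion t = (s.sigma t).image Sigma.snd := by ext; simp
  calc ∑ x ∈ s.biUnion t, f x = ∑ x ∈ (s.sigma t).image Sigma.snd, f x := by rw [h]
    _ ≤ ∑ p ∈ s.sigma t, f p.2 := sum_image_le_of_nonneg fun _ _ => zero_le
    _ = ∑ i ∈ s, ∑ x ∈ t i, f x := sum_sigma _ _ _

theorem Fintype.update_mem_piFinset {ι α : Type*} [DecidableEq ι] [Fintype ι]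
    {A : ι → Finset α} {Q : ι → α} (hQ : Q ∈ piFinset A) {b : ι} {v : α} (hv : v ∈ A b) :
    update Q b v ∈ piFinset A := by
  refine mem_piFinset.2 fun i => ?_
  rcases eq_or_ne i b with rfl | hi
  · simpa using hv
  · simpa [update_of_ne hi] using mem_piFinset.1 hQ i

/-- The overwritten value `Q b` is recovered from the untouched coordinate `Q a`. -/
theorem Function.injOn_update_of_apply_eq {ι α : Type*} [DecidableEq ι] {a b : ι}
    (hab : a ≠ b) : Set.InjOn (fun p : (ι → α) × α => update p.1 b p.2) {p | p.1 a = p.1 b} := by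
  rintro ⟨Q, v⟩ hQ ⟨R, w⟩ hR h
  have hvw : v = w := by simpa using congrFun h b
  have hoff : ∀ i, i ≠ b → Q i = R i := fun i hi => by
    simpa [update_of_ne hi] using congrFun h i
  refine Prod.ext (funext fun i => ?_) hvw
  rcases eq_or_ne i b with rfl | hi
  · rw [← hQ, ← hR]
    exact hoff a hab
  · exact hoff i hi

theorem Finset.card_mul_sum_filter_apply_eq_le {ι α : Type*} [DecidableEq ι] [Fintype ι]
    [DecidableEq α] (A : ι → Finset α) (f : (ι → α) → ℝ≥0∞) {a b : ι} (hab : a ≠ b)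
    (hf : ∀ Q : ι → α, Q a = Q b → ∀ v, f Q ≤ f (update Q b v)) :
    ((A b).card : ℝ≥0∞) * ∑ Q ∈ Fintype.piFinset A with Q a = Q b, f Q ≤
      ∑ Q ∈ Fintype.piFinset A, f Q := by
  set S := {Q ∈ Fintype.piFinset A | Q a = Q b}
  have hinj : Set.InjOn (fun p : (ι → α) × α => update p.1 b p.2) ↑(S ×ˢ A b) :=
    (injOn_update_of_apply_eq hab).mono fun p hp => (mem_filter.1 (mem_product.1 hp).1).2
  calc ((A b).card : ℝ≥0∞) * ∑ Q ∈ S, f Q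
      = ∑ Q ∈ S, (A b).card • f Q := by simp only [mul_sum, nsmul_eq_mul]
    _ ≤ ∑ Q ∈ S, ∑ v ∈ A b, f (update Q b v) :=
        sum_le_sum fun Q hQ => card_nsmul_le_sum _ _ _ fun v _ => hf Q (mem_filter.1 hQ).2 v
    _ = ∑ Q ∈ (S ×ˢ A b).image fun p => update p.1 b p.2, f Q := by
        rw [sum_image hinj, sum_product]
    _ ≤ ∑ Q ∈ Fintype.piFinset A, f Q := by
        refine sum_le_sum_of_subset fun Q hQ => ?_
        obtain ⟨⟨R, v⟩, hRv, rfl⟩ := mem_image.1 hQ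
        obtain ⟨hR, hv⟩ := mem_product.1 hRv
        exact Fintype.update_mem_piFinset (mem_filter.1 hR).1 hv

theorem Fin.two_mul_sum_val (d : ℕ) : 2 * ∑ b : Fin d, (b : ℕ) = d * (d - 1) := by
  rw [Fin.sum_univ_eq_sum_range (fun i => i), mul_comm, sum_range_id_mul_two]

namespace BurrErdosLee

theorem dpow_le_dpow {x y : ℝ≥0∞} (h : x ≤ y) (s : ℕ) : dpow x s ≤ dpow y s := by
  unfold dpow
  split_ifs with hx hy hy
  · exact le_rfl
  · exact zero_le
  · exact absurd (nonpos_iff_eq_zero.1 (hy ▸ h)) hx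
  · exact pow_le_pow_left₀ zero_le h s

theorem defect_le_defect_of_card_le {V : Type} [Fintype V] [DecidableEq V] (G : SimpleGraph V)
    (θ : ℝ) {d d' : ℕ} {Q : Fin d → V} {Q' : Fin d' → V} {T : Finset V}
    (h : (commonNbrs G Q' T).card ≤ (commonNbrs G Q T).card) :
    defect G θ Q T ≤ defect G θ Q' T := by
  unfold defect
  split_ifs with hQ hQ' hQ'
  · exact le_rfl
  · exact zero_le
  · exact absurd (hQ'.trans (by exact_mod_cast h)) hQ
  · gcongr

theorem commonNbrs_update_subset {V : Type} [Fintype V] [DecidableEq V] (G : SimpleGraph V)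
    {d : ℕ} {Q : Fin d → V} (T : Finset V) {a b : Fin d} (hab : a ≠ b) (hQ : Q a = Q b)
    (v : V) : commonNbrs G (update Q b v) T ⊆ commonNbrs G Q T := by
  intro x hx
  simp only [commonNbrs, mem_filter] at hx ⊢
  refine ⟨hx.1, fun i => ?_⟩
  rcases eq_or_ne i b with rfl | hi
  · simpa [update_of_ne hab, hQ] using hx.2 a
  · simpa [update_of_ne hi] using hx.2 i

theorem sum_filter_apply_eq_dpow_defect_le {V : Type} [Fintype V] [DecidableEq V]
    (G : SimpleGraph V) {d m : ℕ} (A : Fin d → Finset V) (hA : ∀ a, m ≤ (A a).card)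
    (T : Finset V) (s : ℕ) (θ : ℝ) {a b : Fin d} (hab : a ≠ b) :
    ∑ Q ∈ Fintype.piFinset A with Q a = Q b, dpow (defect G θ Q T) s ≤
      (∑ Q ∈ Fintype.piFinset A, dpow (defect G θ Q T) s) / m := by
  set total := ∑ Q ∈ Fintype.piFinset A, dpow (defect G θ Q T) s
  have hm : (m : ℝ≥0∞) * ∑ Q ∈ Fintype.piFinset A with Q a = Q b, dpow (defect G θ Q T) s ≤
      total := by
    refine le_trans ?_ (card_mul_sum_filter_apply_eq_le A _ hab fun Q hQ v =>
      dpow_le_dpow (defect_le_defect_of_card_le G θ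
        (card_le_card (commonNbrs_update_subset G T hab hQ v))) s)
    gcongr
    exact hA b
  -- `total / 0 = ∞` only when `total ≠ 0`
  rcases eq_or_ne total 0 with h0 | h0
  · exact (sum_le_sum_of_subset (filter_subset _ _)).trans (h0.trans_le zero_le)
  · rw [ENNReal.le_div_iff_mul_le (Or.inr h0) (Or.inl (ENNReal.natCast_ne_top m)), mul_comm]
    exact hm

end BurrErdosLee

theorem defect_boundary_general (V : Type) [Fintype V] [DecidableEq V] (G : SimpleGraph V)
    (d m : ℕ) (A : Fin d → Finset V) (hA : ∀ a, m ≤ (A a).card) (T : Finset V)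
    (s : ℕ) (θ : ℝ) :
    ∑ Q ∈ (Fintype.piFinset A).filter fun Q => ∃ a b : Fin d, a ≠ b ∧ Q a = Q b,
        dpow (defect G θ Q T) s ≤
      ((d * (d - 1) : ℕ) : ℝ≥0∞) / ((2 * m : ℕ) : ℝ≥0∞) *
        ∑ Q ∈ Fintype.piFinset A, dpow (defect G θ Q T) s := by
  set f := fun Q : Fin d → V => dpow (defect G θ Q T) s
  set total := ∑ Q ∈ Fintype.piFinset A, f Q
  have hcover : ((Fintype.piFinset A).filter fun Q => ∃ a b : Fin d, a ≠ b ∧ Q a = Q b) ⊆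
      univ.biUnion fun b => (Iio b).biUnion fun a => {Q ∈ Fintype.piFinset A | Q a = Q b} := by
    intro Q hQ
    obtain ⟨hQA, a, b, hab, hQab⟩ := mem_filter.1 hQ
    simp only [mem_biUnion, mem_univ, mem_Iio, mem_filter, true_and]
    rcases hab.lt_or_gt with h | h
    · exact ⟨b, a, h, hQA, hQab⟩
    · exact ⟨a, b, h, hQA, hQab.symm⟩
  calc ∑ Q ∈ (Fintype.piFinset A).filter fun Q => ∃ a b : Fin d, a ≠ b ∧ Q a = Q b, f Q
      ≤ ∑ b, ∑ a ∈ Iio b, ∑ Q ∈ Fintype.piFinset A with Q a = Q b, f Q :=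
        (sum_le_sum_of_subset hcover).trans <| (sum_biUnion_le _ _ _).trans <|
          sum_le_sum fun b _ => sum_biUnion_le _ _ _
    _ ≤ ∑ b : Fin d, ∑ _a ∈ Iio b, total / m :=
        sum_le_sum fun b _ => sum_le_sum fun a ha =>
          sum_filter_apply_eq_dpow_defect_le G A hA T s θ (mem_Iio.1 ha).ne
    _ = ((∑ b : Fin d, (b : ℕ) : ℕ) : ℝ≥0∞) * (total / m) := by
        simp only [sum_const, Fin.card_Iio, nsmul_eq_mul, Nat.cast_sum, sum_mul]
    _ = ((d * (d - 1) : ℕ) : ℝ≥0∞) / ((2 * m : ℕ) : ℝ≥0∞) * total := by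
        rw [← Fin.two_mul_sum_val d, Nat.cast_mul, Nat.cast_mul, Nat.cast_ofNat,
          ENNReal.mul_div_mul_left _ _ two_ne_zero ENNReal.ofNat_ne_top]
        simp only [div_eq_mul_inv]
        ring

/-- (Proposition 3.4) The contribution of `d`-tuples with a repeated
coordinate: `Σ_{Q ∈ ∂𝒬} ω_θ(Q;T)^s ≤ (d(d−1)/(2m))·Σ_{Q ∈ A₁ × ⋯ × A_d} ω_θ(Q;T)^s`
when each `|A_a| ≥ m`. -/
theorem defect_boundary (V : Type) [Fintype V] [DecidableEq V] (G : SimpleGraph V)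
    (d m : ℕ) (A : Fin d → Finset V) (hA : ∀ a, m ≤ (A a).card) (T : Finset V)
    (s : ℕ) (θ : ℝ) (hθ : 0 < θ) :
    ∑ Q ∈ (Fintype.piFinset A).filter fun Q => ∃ a b : Fin d, a ≠ b ∧ Q a = Q b,
        dpow (defect G θ Q T) s ≤
      ((d * (d - 1) : ℕ) : ℝ≥0∞) / ((2 * m : ℕ) : ℝ≥0∞) *
        ∑ Q ∈ Fintype.piFinset A, dpow (defect G θ Q T) s :=
  defect_boundary_general V G d m A hA T s θ
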